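/- arXiv:1601.05124 — 4 statements merged into one kernel-verified Lean document; each statement's English description precedes it below -/
import Mathlib

section
/- Let 0 < t1 < 1/4 and let 0 < t0 < t_{0,crit}(t1). Then the set of positive real roots of the polynomial p is nonempty and has a least element r = r(t0,t1); moreover this smallest positive root is a simple root of p, i.e. p(r) = 0 and p'(r) ≠ 0. -/
noncomputable section

/-- The degree-10 polynomial `p` of the paper, as a real function of `x`. -/
def p (t0 t1 x : ℝ) : ℝ :=
  128*x^10 - 124*x^8 + (64*t0 - 16*t1 + 36)*x^6
    + (16*t1^2 + 8*t1 - 28*t0 - 3)*x^4 + t0*(2 - 8*t1)*x^2 + t0^2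

/-- The cubic polynomial `p1` whose greatest real root is `t_{0,crit}(t1)`. -/
def p1 (t1 s : ℝ) : ℝ :=
  8192*s^3 + 192*(64*t1 - 7)*s^2 - 48*(1 - 4*t1)^2*s + (108*t1 - 11)*(4*t1 - 1)^3

/-!
As a quadratic in `t0`, `p t0 t1 x = (t0 - φ₊ x) * (t0 - φ₋ x)` with
`φ± x = pBranch t1 x (±√(pDisc t1 x))`. Write `4 t1 = (1 - 2m)²(1 + 4m)` with `m ∈ (0, 1/2)`;
this cubic is strictly decreasing there, so the discriminant stays nonnegative on `[0, m]`, and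
`φ₊ m = 4m³ - 6m⁴`. Since `4m³ - 6m⁴` is a root of `p1 t1` whose cofactor is positive beyond it,
`0 = φ₊ 0 < t0 < φ₊ m`. The smallest positive root `r` is the first point of `[0, m]` where `φ₊`
reaches `t0`: before it `φ₋ ≤ φ₊ < t0`, so both factors of `p` are positive. On the branch
`t0 = φ₊ x` the derivative of `p` factors, and its only factor that can vanish is
`√(pDisc t1 x) - (2x - 4x²)`; its vanishing means `(1 - 2x)²(1 + 4x) = 4 t1`, i.e. `x = m`,
whereas `r < m`.
-/

open Set

theorem exists_mem_Ioo_eq_forall_Ico_lt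
    {α δ : Type*} [ConditionallyCompleteLinearOrder α] [TopologicalSpace α] [OrderTopology α]
    [DenselyOrdered α] [LinearOrder δ] [TopologicalSpace δ] [OrderClosedTopology δ]
    {f : α → δ} {a b : α} {c : δ} (hab : a ≤ b) (hf : ContinuousOn f (Icc a b))
    (ha : f a < c) (hb : c < f b) :
    ∃ r ∈ Ioo a b, f r = c ∧ ∀ x ∈ Ico a r, f x < c := by
  set S := Icc a b ∩ f ⁻¹' Ici c
  have hS : IsClosed S := hf.preimage_isClosed_of_isClosed isClosed_Icc isClosed_Ici
  have hSne : S.Nonempty := ⟨b, right_mem_Icc.2 hab, hb.le⟩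
  have hSbdd : BddBelow S := ⟨a, fun x hx => hx.1.1⟩
  have hrS : sInf S ∈ S := hS.csInf_mem hSne hSbdd
  obtain ⟨y, hy, hfy⟩ : ∃ y ∈ Icc a (sInf S), f y = c :=
    intermediate_value_Icc hrS.1.1 (hf.mono (Icc_subset_Icc_right hrS.1.2)) ⟨ha.le, hrS.2⟩
  have hyS : y ∈ S := ⟨⟨hy.1, hy.2.trans hrS.1.2⟩, hfy.ge⟩
  have hyr : y = sInf S := le_antisymm hy.2 (csInf_le hSbdd hyS)
  refine ⟨sInf S, ⟨?_, ?_⟩, hyr ▸ hfy, fun x hx => ?_⟩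
  · exact lt_of_le_of_ne hrS.1.1 (by rintro h; exact ha.not_ge (h ▸ hrS.2))
  · exact lt_of_le_of_ne hrS.1.2 (by rintro h; rw [hyr, h] at hfy; exact hb.ne' hfy)
  · by_contra! hcx
    exact hx.2.not_ge (csInf_le hSbdd ⟨⟨hx.1, hx.2.le.trans hrS.1.2⟩, hcx⟩)

theorem hasDerivAt_p (t0 t1 x : ℝ) :
    HasDerivAt (p t0 t1) (1280*x^9 - 992*x^7 + 6*(64*t0 - 16*t1 + 36)*x^5
      + 4*(16*t1^2 + 8*t1 - 28*t0 - 3)*x^3 + 2*t0*(2 - 8*t1)*x) x := by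
  have h := (((((((hasDerivAt_pow 10 x).const_mul 128).sub ((hasDerivAt_pow 8 x).const_mul 124)).add
    ((hasDerivAt_pow 6 x).const_mul (64*t0 - 16*t1 + 36))).add
    ((hasDerivAt_pow 4 x).const_mul (16*t1^2 + 8*t1 - 28*t0 - 3))).add
    ((hasDerivAt_pow 2 x).const_mul (t0*(2 - 8*t1)))).add_const (t0^2))
  exact h.congr_deriv (by push_cast; ring)

def pDisc (t1 x : ℝ) : ℝ := (1 - 4*x^2)^2 - 4*t1

def pBranch (t1 x w : ℝ) : ℝ := -32*x^6 + 14*x^4 - (1 - 4*t1)*x^2 + 2*x^2*(1 - 4*x^2)*w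

section

variable {t0 t1 x w : ℝ}

theorem p_eq_mul (hw : w^2 = pDisc t1 x) :
    p t0 t1 x = (t0 - pBranch t1 x w) * (t0 - pBranch t1 x (-w)) := by
  unfold p pBranch
  unfold pDisc at hw
  linear_combination (2*x^2*(1 - 4*x^2))^2 * hw

theorem p_pos_of_pBranch_lt (hx : 4*x^2 ≤ 1) (hw0 : 0 ≤ w) (hw : w^2 = pDisc t1 x)
    (ht0 : pBranch t1 x w < t0) : 0 < p t0 t1 x := by
  have hbranch : pBranch t1 x (-w) ≤ pBranch t1 x w := by
    unfold pBranch
    nlinarith [mul_nonneg (mul_nonneg (sq_nonneg x) (sub_nonneg.2 hx)) hw0]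
  rw [p_eq_mul hw]
  exact mul_pos (sub_pos.2 ht0) (sub_pos.2 (hbranch.trans_lt ht0))

theorem deriv_p_eq_mul (hw : w^2 = pDisc t1 x) (ht0 : pBranch t1 x w = t0) :
    deriv (p t0 t1) x =
      8*x^3*(1 - 4*x^2)*(w - 2*(1 - 4*x^2))*(w + 4*x^2 - 2*x)*(w + 4*x^2 + 2*x) := by
  rw [(hasDerivAt_p t0 t1 x).deriv]
  unfold pBranch at ht0
  unfold pDisc at hw
  linear_combination (-(384*x^5 - 112*x^3 + (2 - 8*t1)*(2*x))) * ht0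
    + (16*x^3 - 8*x^3*w - 192*x^5 + 32*x^5*w + 512*x^7) * hw

end

theorem strictAntiOn_cubic_param :
    StrictAntiOn (fun m : ℝ => (1 - 2*m)^2*(1 + 4*m)) (Icc 0 (1/2)) := by
  rintro a ⟨ha0, ha⟩ b ⟨hb0, hb⟩ hab
  have h : 0 < 3*(a + b) - 4*(a^2 + a*b + b^2) := by
    nlinarith [mul_nonneg ha0 (sub_nonneg.2 ha), mul_nonneg ha0 (sub_nonneg.2 hb),
      mul_nonneg hb0 (sub_nonneg.2 hb)]
  nlinarith [mul_pos (sub_pos.2 hab) h]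

section

variable {t1 m : ℝ}

theorem exists_cubic_param (ht1 : 0 < t1) (ht1' : t1 < 1/4) :
    ∃ m ∈ Ioo (0 : ℝ) (1/2), 4*t1 = (1 - 2*m)^2*(1 + 4*m) := by
  have hcont : ContinuousOn (fun m : ℝ => (1 - 2*m)^2*(1 + 4*m)) (Icc 0 (1/2)) := by fun_prop
  obtain ⟨m, hm, hgm⟩ := intermediate_value_Ioo' (by norm_num) hcont
    (show 4*t1 ∈ Ioo _ _ by constructor <;> norm_num <;> linarith)
  exact ⟨m, hm, hgm.symm⟩

theorem pDisc_nonneg (hm : 4*t1 = (1 - 2*m)^2*(1 + 4*m)) (hm2 : m ≤ 1/2) {x : ℝ} (hx0 : 0 ≤ x)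
    (hxm : x ≤ m) : 0 ≤ pDisc t1 x := by
  have hg : (1 - 2*m)^2*(1 + 4*m) ≤ (1 - 2*x)^2*(1 + 4*x) :=
    strictAntiOn_cubic_param.antitoneOn ⟨hx0, hxm.trans hm2⟩ ⟨hx0.trans hxm, hm2⟩ hxm
  have hdisc : pDisc t1 x = (1 - 2*x)^2*(1 + 4*x) - 4*t1 + (2*x - 4*x^2)^2 := by
    unfold pDisc; ring
  rw [hdisc]
  nlinarith [sq_nonneg (2*x - 4*x^2)]

theorem pBranch_sqrt_pDisc_of_param (hm : 4*t1 = (1 - 2*m)^2*(1 + 4*m)) (hm0 : 0 ≤ m)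
    (hm2 : m ≤ 1/2) :
    pBranch t1 m √(pDisc t1 m) = 4*m^3 - 6*m^4 := by
  have hdisc : pDisc t1 m = (2*m - 4*m^2)^2 := by
    unfold pDisc; linear_combination -hm
  rw [hdisc, Real.sqrt_sq (by nlinarith)]
  unfold pBranch
  linear_combination m^2 * hm

theorem p1_pos_of_gt (hm : 4*t1 = (1 - 2*m)^2*(1 + 4*m)) (hm0 : 0 < m) (hm2 : m < 1/2) {s : ℝ}
    (hs : 4*m^3 - 6*m^4 < s) : 0 < p1 t1 s := by
  set d := s - (4*m^3 - 6*m^4)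
  have key : p1 t1 s = 8192*d*(d^2 + (27/128 - 9/2*m^2 + 18*m^3 - 18*m^4)*d
      + 27/16*m^3*(1 - 2*m)^3*(1 + 4*m - 8*m^2)) := by
    unfold p1
    linear_combination (-(11 + 132*m^2 - 176*m^3 + 1584*m^4 - 4224*m^5 + 49472*m^6
      - 186624*m^7 + 248832*m^8 - 110592*m^9
      + t1*(-196 - 1824*m^2 + 2432*m^3 - 15552*m^4 + 41472*m^5 - 27648*m^6)
      + t1^2*(1040 + 5184*m^2 - 6912*m^3) - 1728*t1^3
      + s*(-48 - 576*m^2 + 768*m^3 + 192*t1) - 3072*s^2)) * hm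
  have hd : 0 < d := sub_pos.2 hs
  have h12 : 0 < 1 - 2*m := by linarith
  have hc1 : 0 ≤ 27/128 - 9/2*m^2 + 18*m^3 - 18*m^4 := by
    nlinarith [mul_nonneg (sq_nonneg (1 - 4*m)) (mul_pos hm0 h12).le]
  have hc0 : 0 < 27/16*m^3*(1 - 2*m)^3*(1 + 4*m - 8*m^2) := by
    have : 0 < 1 + 4*m - 8*m^2 := by nlinarith [mul_pos hm0 h12]
    positivity
  rw [key]
  exact mul_pos (mul_pos (by norm_num) hd)
    (add_pos_of_nonneg_of_pos (add_nonneg (sq_nonneg d) (mul_nonneg hc1 hd.le)) hc0)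

theorem deriv_p_ne_zero (ht1 : 0 < t1) (hm : 4*t1 = (1 - 2*m)^2*(1 + 4*m)) (hm2 : m ≤ 1/2)
    {t0 x w : ℝ} (hx0 : 0 < x) (hxm : x < m) (hw0 : 0 ≤ w) (hw : w^2 = pDisc t1 x)
    (ht0 : pBranch t1 x w = t0) : deriv (p t0 t1) x ≠ 0 := by
  have hu : 0 < 1 - 4*x^2 := by nlinarith
  rw [deriv_p_eq_mul hw ht0]
  refine mul_ne_zero (mul_ne_zero (mul_ne_zero (mul_ne_zero (by positivity) hu.ne') ?_) ?_)
    (by positivity)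
  · intro h
    unfold pDisc at hw
    nlinarith [sq_nonneg (1 - 4*x^2)]
  · intro h
    have hg : (1 - 2*x)^2*(1 + 4*x) = (1 - 2*m)^2*(1 + 4*m) := by
      unfold pDisc at hw
      linear_combination (-1) * hw + hm + (w + 2*x - 4*x^2) * h
    exact hxm.ne
      (strictAntiOn_cubic_param.injOn ⟨hx0.le, by linarith⟩ ⟨hx0.le.trans hxm.le, hm2⟩ hg)

end

/-- For `(t0,t1)` in the phase-diagram region `F`, the polynomial `p` has a smallest
positive root `r = r(t0,t1)`, which is moreover a simple root of `p`. -/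
theorem smallest_positive_root_of_p_exists_and_simple
    (t0 t1 tc : ℝ) (ht1 : 0 < t1) (ht1' : t1 < 1/4)
    (htc : IsGreatest {s : ℝ | p1 t1 s = 0} tc)
    (ht0 : 0 < t0) (ht0' : t0 < tc) :
    ∃ r : ℝ, IsLeast {x : ℝ | 0 < x ∧ p t0 t1 x = 0} r ∧
      deriv (p t0 t1) r ≠ 0 := by
  obtain ⟨m, ⟨hm0, hm2⟩, hm⟩ := exists_cubic_param ht1 ht1'
  have ht0m : t0 < 4*m^3 - 6*m^4 :=
    ht0'.trans_le (not_lt.1 fun h => (p1_pos_of_gt hm hm0 hm2 h).ne' htc.1)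
  have hsq : ∀ x ∈ Icc 0 m, √(pDisc t1 x) ^ 2 = pDisc t1 x := fun x hx =>
    Real.sq_sqrt (pDisc_nonneg hm hm2.le hx.1 hx.2)
  obtain ⟨r, ⟨hr0, hrm⟩, hr, hlt⟩ :=
    exists_mem_Ioo_eq_forall_Ico_lt (f := fun x => pBranch t1 x √(pDisc t1 x)) hm0.le
      (by unfold pBranch pDisc; fun_prop) (by simpa [pBranch] using ht0)
      (by rwa [pBranch_sqrt_pDisc_of_param hm hm0.le hm2.le])
  have hrIcc : r ∈ Icc 0 m := ⟨hr0.le, hrm.le⟩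
  refine ⟨r, ⟨⟨hr0, ?_⟩, fun x ⟨hx0, hpx⟩ => ?_⟩,
    deriv_p_ne_zero ht1 hm hm2.le hr0 hrm (Real.sqrt_nonneg _) (hsq r hrIcc) hr⟩
  · rw [p_eq_mul (hsq r hrIcc), hr, sub_self, zero_mul]
  · by_contra! hxr
    exact (p_pos_of_pBranch_lt (by nlinarith) (Real.sqrt_nonneg _) (hsq x ⟨hx0.le, by linarith⟩)
      (hlt x ⟨hx0.le, hxr⟩)).ne' hpx
end
end

section
/- Let 0 < t1 < 1/4 and 0 < t0 < t_{0,crit}(t1), and let r be the smallest positive root of the polynomial p. Then 0 < r < 1/2 and 4t1 < (1 - 4r^2)^2. Consequently a0 := (1 - 4r^2 - sqrt((1 - 4r^2)^2 - 4t1))/2 is a well-defined real number, and it satisfies a0 > 0 and 2a0 + 2r < 1. -/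
set_option maxHeartbeats 1000000

noncomputable section

lemma keyB (x s : ℝ) (hx0 : 0 < x) (hx2 : x < 1/2) (hs : 4*x^3 - 6*x^4 < s) :
    0 < p1 ((16*x^3 - 12*x^2 + 1)/4) s := by
  have key : p1 ((16*x^3 - 12*x^2 + 1)/4) s
      = (s - (4*x^3 - 6*x^4)) *
        (8192*(s - (4*x^3 - 6*x^4))^2
          + (576*(3 - 64*x^2*(1-2*x)^2))*(s - (4*x^3 - 6*x^4))
          + 13824*x^3*(1-2*x)^3*(1+4*x-8*x^2)) := by
    unfold p1; ring
  have h12 : 0 < 1 - 2*x := by linarith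
  have hL : 0 < 576*(3 - 64*x^2*(1-2*x)^2) := by
    nlinarith [sq_nonneg (1-4*x), mul_pos hx0 h12, sq_nonneg (x*(1-2*x))]
  have hquad : 0 < 1+4*x-8*x^2 := by nlinarith
  have hQ : 0 < 13824*x^3*(1-2*x)^3*(1+4*x-8*x^2) := by
    have := mul_pos (mul_pos (pow_pos hx0 3) (pow_pos h12 3)) hquad
    nlinarith [this]
  have hd : 0 < s - (4*x^3 - 6*x^4) := by linarith
  rw [key]
  have hsum : 0 < 8192*(s - (4*x^3 - 6*x^4))^2
          + (576*(3 - 64*x^2*(1-2*x)^2))*(s - (4*x^3 - 6*x^4))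
          + 13824*x^3*(1-2*x)^3*(1+4*x-8*x^2) := by positivity
  exact mul_pos hd hsum

/-- For `(t0,t1) ∈ F`, the smallest positive root `r` of `p` satisfies `0 < r < 1/2` and
`4 t1 < (1 - 4r^2)^2`; consequently `a0 = (1 - 4r^2 - √((1-4r^2)^2 - 4t1))/2` is a
well-defined real number with `a0 > 0` and `2a0 + 2r < 1`. -/
theorem properties_of_r_and_a0 (t0 t1 tc r : ℝ) (ht1 : 0 < t1) (ht1' : t1 < 1/4)
    (htc : IsGreatest {s : ℝ | p1 t1 s = 0} tc)
    (ht0 : 0 < t0) (ht0' : t0 < tc)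
    (hr : IsLeast {x : ℝ | 0 < x ∧ p t0 t1 x = 0} r) :
    0 < r ∧ r < 1/2 ∧ 4*t1 < (1 - 4*r^2)^2 ∧
      (0 < (1 - 4*r^2 - Real.sqrt ((1 - 4*r^2)^2 - 4*t1))/2 ∧
        2*((1 - 4*r^2 - Real.sqrt ((1 - 4*r^2)^2 - 4*t1))/2) + 2*r < 1) := by
  obtain ⟨⟨hrpos, hpr⟩, hrlb⟩ := hr
  -- Step A: root x of g(x) = 16x^3-12x^2+1-4t1 in (0,1/2)
  set G : ℝ → ℝ := fun x => 16*x^3 - 12*x^2 + 1 - 4*t1 with hG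
  have hGc : ContinuousOn G (Set.Icc (0:ℝ) (1/2)) := by fun_prop
  have hival := intermediate_value_Ioo' (by norm_num : (0:ℝ) ≤ 1/2) hGc
  have h0mem : (0:ℝ) ∈ Set.Ioo (G (1/2)) (G 0) := by
    constructor <;> (simp only [hG]; norm_num) <;> linarith
  obtain ⟨x, hxIoo, hGx⟩ := hival h0mem
  obtain ⟨hx0, hx2⟩ := hxIoo
  have hgx : 16*x^3 - 12*x^2 + 1 - 4*t1 = 0 := hGx
  have ht1eq : t1 = (16*x^3 - 12*x^2 + 1)/4 := by linarith
  -- Step B: tc ≤ 4x^3 - 6x^4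
  have htcle : tc ≤ 4*x^3 - 6*x^4 := by
    by_contra h
    push_neg at h
    have hpos := keyB x tc hx0 hx2 h
    have h0 : p1 t1 tc = 0 := htc.1
    rw [ht1eq] at h0
    linarith
  have ht0T : t0 < 4*x^3 - 6*x^4 := lt_of_lt_of_le ht0' htcle
  -- Step C: IVT for f
  set f : ℝ → ℝ := fun z =>
    -32*z^6 + 14*z^4 - (1-4*t1)*z^2
      + 2*z^2*(1-4*z^2)*Real.sqrt ((1-4*z^2)^2 - 4*t1) with hf
  have hfc : ContinuousOn f (Set.Icc (0:ℝ) x) := by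
    apply Continuous.continuousOn
    fun_prop
  have hf0 : f 0 = 0 := by simp [hf]
  have hsqx : (1-4*x^2)^2 - 4*t1 = (2*x*(1-2*x))^2 := by rw [ht1eq]; ring
  have hfx : f x = 4*x^3 - 6*x^4 := by
    simp only [hf]
    rw [hsqx, Real.sqrt_sq (by nlinarith : (0:ℝ) ≤ 2*x*(1-2*x))]
    linear_combination (4*x^2) * ht1eq
  have hmem : t0 ∈ Set.Ioo (f 0) (f x) := by
    rw [hf0, hfx]; exact ⟨ht0, ht0T⟩
  obtain ⟨w, hwIoo, hfw⟩ := intermediate_value_Ioo (le_of_lt hx0) hfc hmem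
  obtain ⟨hw0, hwx⟩ := hwIoo
  -- Step D: p t0 t1 w = 0
  have hw2 : w < 1/2 := lt_trans hwx hx2
  have hhw : (0:ℝ) ≤ (1-4*w^2)^2 - 4*t1 := by
    nlinarith [sq_nonneg (2*x*(1-2*x)), mul_pos (sub_pos.mpr hwx) (by nlinarith : (0:ℝ) < 2 - 4*w^2 - 4*x^2)]
  set S := Real.sqrt ((1-4*w^2)^2 - 4*t1) with hSdef
  have hS2 : S^2 = (1-4*w^2)^2 - 4*t1 := Real.sq_sqrt hhw
  have hfw' : -32*w^6 + 14*w^4 - (1-4*t1)*w^2 + 2*w^2*(1-4*w^2)*S = t0 := hfw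
  have hpw : p t0 t1 w = 0 := by
    unfold p
    linear_combination
      (-(t0 - (-32*w^6 + 14*w^4 - (1-4*t1)*w^2) + 2*w^2*(1-4*w^2)*S)) * hfw'
        + (2*w^2*(1-4*w^2))^2 * hS2
  -- Step E: r ≤ w
  have hrw : r ≤ w := hrlb ⟨hw0, hpw⟩
  have hrx : r < x := lt_of_le_of_lt hrw hwx
  have hr2 : r < 1/2 := lt_trans hrx hx2
  -- Step F: g(r) > 0
  have hgr : 0 < 16*r^3 - 12*r^2 + 1 - 4*t1 := by
    nlinarith [mul_pos (sub_pos.mpr hrx) (mul_pos hrpos (by linarith : (0:ℝ) < 1 - 2*x)),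
      mul_pos (sub_pos.mpr hrx) (mul_pos hx0 (by linarith : (0:ℝ) < 1 - 2*r)),
      mul_pos (sub_pos.mpr hrx) (mul_pos hrpos (by linarith : (0:ℝ) < 1 - 2*r)),
      mul_pos (sub_pos.mpr hrx) (mul_pos hx0 (by linarith : (0:ℝ) < 1 - 2*x))]
  -- Step G: conclusions
  have h4t1 : 4*t1 < (1 - 4*r^2)^2 := by nlinarith [sq_nonneg (r*(1-2*r))]
  refine ⟨hrpos, hr2, h4t1, ?_, ?_⟩
  · have h1 : Real.sqrt ((1 - 4*r^2)^2 - 4*t1) < 1 - 4*r^2 := by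
      rw [Real.sqrt_lt' (by nlinarith : (0:ℝ) < 1 - 4*r^2)]
      nlinarith
    linarith
  · have h2 : 2*r - 4*r^2 < Real.sqrt ((1 - 4*r^2)^2 - 4*t1) := by
      have hle : (2*r - 4*r^2)^2 < (1 - 4*r^2)^2 - 4*t1 := by nlinarith
      have hnn : (0:ℝ) ≤ 2*r - 4*r^2 := by nlinarith
      exact (Real.lt_sqrt hnn).mpr hle
    linarith
end
end

section
/- Fix t0 > 0 and let 0 < t1 < t1' < 1/4 be such that t0 < t_{0,crit}(t1') (hence also t0 < t_{0,crit}(t1), since t_{0,crit} is decreasing, so both (t0,t1) and (t0,t1') lie in F). If r and r' denote the smallest positive roots of p for the parameter pairs (t0, t1) and (t0, t1') respectively, then r < r'; that is, for fixed t0 the function t1 ↦ r(t0,t1) is strictly increasing. -/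
noncomputable section

/-- The key identity for `p`, viewing it as a quadratic in `t1`. -/
lemma p_key (t0 t1 x : ℝ) :
    p t0 t1 x = (4*x^2*t1 - 2*x^4 + x^2 - t0)^2
      + 4*x^2*(4*x^2-1)^2*(2*x^4 - x^2 + t0) := by
  unfold p; ring

lemma p_diff (t0 t1 t1' x : ℝ) :
    p t0 t1' x - p t0 t1 x
      = 8*(t1'-t1)*x^2*(-(2*x^4) + (2*t1+2*t1'+1)*x^2 - t0) := by
  unfold p; ring

lemma p_continuous (t0 t1 : ℝ) : Continuous (p t0 t1) := by
  unfold p; fun_prop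

set_option maxHeartbeats 2000000 in
/-- For fixed `t0 > 0`, the smallest positive root `r(t0, t1)` of `p` is strictly
increasing in `t1`: if `0 < t1 < t1' < 1/4` and `t0 < t_{0,crit}(t1')`, then the
smallest positive roots `r`, `r'` of `p` at `(t0,t1)` and `(t0,t1')` satisfy `r < r'`. -/
theorem r_strictly_increasing_in_t1 (t0 t1 t1' tc' r r' : ℝ)
    (ht0 : 0 < t0) (ht1 : 0 < t1) (h12 : t1 < t1') (ht1' : t1' < 1/4)
    (htc' : IsGreatest {s : ℝ | p1 t1' s = 0} tc')
    (ht0' : t0 < tc')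
    (hr : IsLeast {x : ℝ | 0 < x ∧ p t0 t1 x = 0} r)
    (hr' : IsLeast {x : ℝ | 0 < x ∧ p t0 t1' x = 0} r') :
    r < r' := by
  obtain ⟨⟨hrpos, hrz⟩, hrleast⟩ := hr
  obtain ⟨⟨hr'pos, hr'z⟩, _⟩ := hr'
  have hpos2 : (0:ℝ) < r'^2 := by positivity
  have hposr2 : (0:ℝ) < r^2 := by positivity
  have key' := p_key t0 t1' r'
  rw [hr'z] at key'
  by_cases hcase : 2*r'^4 - r'^2 + t0 ≤ 0
  · -- main case: p t0 t1 r' < 0, use IVT on [0, r']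
    have hE : 0 < -(2*r'^4) + (2*t1+2*t1'+1)*r'^2 - t0 := by
      nlinarith [mul_pos (by linarith : (0:ℝ) < 2*t1+2*t1') hpos2]
    have hneg : p t0 t1 r' < 0 := by
      have hd := p_diff t0 t1 t1' r'
      rw [hr'z] at hd
      nlinarith [mul_pos (mul_pos (by linarith : (0:ℝ) < 8*(t1'-t1)) hpos2) hE]
    have h0 : 0 < p t0 t1 0 := by
      unfold p; norm_num; positivity
    have hIV : (0:ℝ) ∈ Set.Ioo (p t0 t1 r') (p t0 t1 0) := ⟨hneg, h0⟩
    obtain ⟨c, hc, hcz⟩ :=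
      intermediate_value_Ioo' (le_of_lt hr'pos) (p_continuous t0 t1).continuousOn hIV
    exact lt_of_le_of_lt (hrleast ⟨hc.1, hcz⟩) hc.2
  · -- degenerate case: r'² = 1/4 and t0 = t1' + 1/8; contradicts existence of r
    push_neg at hcase
    have hq' : 4*r'^2*(4*r'^2-1)^2*(2*r'^4 - r'^2 + t0) ≤ 0 := by
      nlinarith [sq_nonneg (4*r'^2*t1' - 2*r'^4 + r'^2 - t0)]
    have hsq : (4*r'^2-1)^2 ≤ 0 := by
      nlinarith [mul_pos hpos2 hcase]
    have h14 : 4*r'^2 - 1 = 0 := sq_eq_zero_iff.mp (le_antisymm hsq (sq_nonneg _))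
    have hy' : r'^2 = 1/4 := by linarith
    have hB'sq : (4*r'^2*t1' - 2*r'^4 + r'^2 - t0)^2 = 0 := by
      linear_combination (-1)*key' - (4*r'^2*(4*r'^2-1)*(2*r'^4 - r'^2 + t0)) * h14
    have hB' : 4*r'^2*t1' - 2*r'^4 + r'^2 - t0 = 0 := sq_eq_zero_iff.mp hB'sq
    have hr4' : r'^4 = 1/16 := by linear_combination (r'^2 + 1/4) * hy'
    have ht0eq : t0 = t1' + 1/8 := by
      linear_combination (-1)*hB' + 4*t1'*hy' - 2*hr4' + hy'
    -- now analyze the root r at parameter t1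
    have keyr := p_key t0 t1 r
    rw [hrz] at keyr
    have hqpos : 0 < 2*r^4 - r^2 + t0 := by
      nlinarith [sq_nonneg (2*r^2 - 1/2)]
    have hq : 4*r^2*(4*r^2-1)^2*(2*r^4 - r^2 + t0) ≤ 0 := by
      nlinarith [sq_nonneg (4*r^2*t1 - 2*r^4 + r^2 - t0)]
    have hsqr : (4*r^2-1)^2 ≤ 0 := by
      nlinarith [mul_pos hposr2 hqpos]
    have h14r : 4*r^2 - 1 = 0 := sq_eq_zero_iff.mp (le_antisymm hsqr (sq_nonneg _))
    have hyr : r^2 = 1/4 := by linarith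
    have hBrsq : (4*r^2*t1 - 2*r^4 + r^2 - t0)^2 = 0 := by
      linear_combination (-1)*keyr - (4*r^2*(4*r^2-1)*(2*r^4 - r^2 + t0)) * h14r
    have hBr : 4*r^2*t1 - 2*r^4 + r^2 - t0 = 0 := sq_eq_zero_iff.mp hBrsq
    have hr4 : r^4 = 1/16 := by linear_combination (r^2 + 1/4) * hyr
    have : t0 = t1 + 1/8 := by
      linear_combination (-1)*hBr + 4*t1*hyr - 2*hr4 + hyr
    linarith
end
end

section
/- Let r, a0, t0, t1 be real numbers satisfying the nonlinear system a0^2 - (1 - 4r^2) a0 + t1 = 0 and 2r^4 - r^2(1 - 4a0^2) + t0 = 0. Then p(r) = 0, where p is the degree-10 polynomial with parameters (t0, t1). -/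
noncomputable section

/-- If `(r, a0, t0, t1)` satisfy the nonlinear system
`a0² - (1 - 4r²) a0 + t1 = 0` and `2r⁴ - r²(1 - 4a0²) + t0 = 0`
of Proposition 2.9, then `r` is a root of the degree-10 polynomial `p`. -/
theorem system_implies_root_of_p (r a0 t0 t1 : ℝ)
    (h1 : a0^2 - (1 - 4*r^2)*a0 + t1 = 0)
    (h2 : 2*r^4 - r^2*(1 - 4*a0^2) + t0 = 0) :
    p t0 t1 r = 0 := by
  unfold p
  linear_combination (16*r^4*(a0^2+t1+(1-4*r^2)*a0)) * h1
    - (4*r^2*a0^2 + r^2 - 2*r^4 - t0 + 8*r^2*t1 - 4*r^2*(1-4*r^2)^2) * h2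
end
end
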